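/- For each fixed t > 0 the map y ↦ ξ(t,y) is locally absolutely continuous, and for almost every y ∈ ℝ its derivative is given by ∂_y ξ(t,y) = (1/4)(2 + t·ū_x(y))² if ū_x(y) > −2/t, and ∂_y ξ(t,y) = 0 if ū_x(y) ≤ −2/t. -/

import Mathlib

/-!
Since `sign (b - x) - sign (a - x)` is `2` on `(a, b)` and `0` off `[a, b]`, the increment
`φ(s, b) - φ(s, a)` is `(1/2) ∫_a^b 1_{ū_x > -2/s} ū_x²`. Exchanging the `s`- and `x`-integrals,
`ξ(t, b) - ξ(t, a) = ∫_a^b (1 + t ū_x + (ū_x² / 2) ∫₀ᵗ (t - s) 1_{ū_x > -2/s} ds)`, and the inner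
integral is elementary: when `t ū_x > -2` the indicator is `1` on all of `(0, t]` and the integrand
is `(1/4)(2 + t ū_x)²`; otherwise the indicator cuts off at `s = -2/ū_x` and the integrand vanishes.
The a.e. derivative then comes from the Lebesgue differentiation theorem, the integrand being
locally integrable because `ū_x ∈ L²`.
-/

open MeasureTheory

/-- `φ(t,y) = (1/4) ∫_{{ū_x > -2/t}} sign(y-x) ū_x(x)² dx` for `t ≠ 0`, and the full
integral `φ(0,y) = (1/4) ∫_ℝ sign(y-x) ū_x(x)² dx` at `t = 0`. -/
noncomputable def phiHS (w : ℝ → ℝ) (t y : ℝ) : ℝ :=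
  if t = 0 then (1 / 4) * ∫ x : ℝ, Real.sign (y - x) * (w x) ^ 2
  else (1 / 4) * ∫ x in {x : ℝ | w x > -2 / t}, Real.sign (y - x) * (w x) ^ 2

/-- The characteristic `ξ(t,y) = y + t ū(y) + ∫₀ᵗ (t-s) φ(s,y) ds`. -/
noncomputable def xiHS (u w : ℝ → ℝ) (t y : ℝ) : ℝ :=
  y + t * u y + ∫ s in (0 : ℝ)..t, (t - s) * phiHS w s y

open Set

@[fun_prop]
lemma Real.measurable_sign : Measurable Real.sign :=
  Measurable.ite measurableSet_Iio measurable_const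
    (Measurable.ite measurableSet_Ioi measurable_const measurable_const)

lemma Real.abs_sign_le_one (r : ℝ) : |Real.sign r| ≤ 1 := by
  rcases Real.sign_apply_eq r with h | h | h <;> simp [h]

lemma Real.sign_sub_sub_sign_sub {a b x : ℝ} (hab : a ≤ b) (hxa : x ≠ a) (hxb : x ≠ b) :
    Real.sign (b - x) - Real.sign (a - x) = if x ∈ Ioc a b then 2 else 0 := by
  rcases hxa.lt_or_gt with hxa | hxa
  · rw [Real.sign_of_pos (by linarith), Real.sign_of_pos (by linarith), if_neg (by grind)]
    ring
  rcases hxb.lt_or_gt with hxb | hxb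
  · rw [Real.sign_of_pos (by linarith), Real.sign_of_neg (by linarith), if_pos ⟨hxa, hxb.le⟩]
    ring
  · rw [Real.sign_of_neg (by linarith), Real.sign_of_neg (by linarith), if_neg (by grind)]
    ring

lemma norm_sign_mul_sq_le (r c : ℝ) : ‖Real.sign r * c ^ 2‖ ≤ c ^ 2 := by
  rw [norm_mul, Real.norm_eq_abs, Real.norm_eq_abs, abs_sq]
  exact mul_le_of_le_one_left (sq_nonneg c) (Real.abs_sign_le_one r)

lemma integral_const_sub_id (t m : ℝ) : ∫ s in (0 : ℝ)..m, (t - s) = t * m - m ^ 2 / 2 := by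
  rw [intervalIntegral.integral_sub intervalIntegrable_const intervalIntegral.intervalIntegrable_id]
  simp only [intervalIntegral.integral_const, integral_id, smul_eq_mul]
  ring

lemma one_add_mul_add_integral_ite {t : ℝ} (ht : 0 < t) (c : ℝ) :
    1 + t * c + ∫ s in (0 : ℝ)..t, (if -2 / s < c then (t - s) * (c ^ 2 / 2) else 0) =
      if c > -2 / t then 1 / 4 * (2 + t * c) ^ 2 else 0 := by
  have hset : MeasurableSet {s : ℝ | -2 / s < c} :=
    measurableSet_lt (measurable_const.div measurable_id) measurable_const
  have hint : ∫ s in (0 : ℝ)..t, (if -2 / s < c then (t - s) * (c ^ 2 / 2) else 0) =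
      ∫ s in Ioc 0 t ∩ {s | -2 / s < c}, (t - s) * (c ^ 2 / 2) := by
    rw [intervalIntegral.integral_of_le ht.le, ← setIntegral_indicator hset]
    rfl
  rw [hint]
  split_ifs with hc
  · have hsub : Ioc 0 t ⊆ {s | -2 / s < c} := by
      intro s ⟨hs0, hst⟩
      rw [gt_iff_lt, div_lt_iff₀ ht] at hc
      rw [mem_ofPred_eq, div_lt_iff₀ hs0]
      rcases le_or_gt 0 c with hc0 | hc0 <;> nlinarith
    rw [inter_eq_left.2 hsub, integral_mul_const, ← intervalIntegral.integral_of_le ht.le,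
      integral_const_sub_id]
    ring
  · have hc0 : c < 0 := by
      have : -2 / t < 0 := div_neg_of_neg_of_pos (by norm_num) ht
      linarith
    have hm : -2 / c ≤ t := by
      rw [div_le_iff_of_neg hc0]
      rw [gt_iff_lt, not_lt, le_div_iff₀ ht] at hc
      linarith
    have hIoo : Ioc 0 t ∩ {s | -2 / s < c} = Ioo 0 (-2 / c) := by
      ext s
      simp only [mem_inter_iff, mem_Ioc, mem_ofPred_eq, mem_Ioo]
      constructor
      · rintro ⟨⟨hs0, -⟩, hs⟩
        rw [div_lt_iff₀ hs0] at hs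
        exact ⟨hs0, by rw [lt_div_iff_of_neg hc0]; linarith⟩
      · rintro ⟨hs0, hs⟩
        refine ⟨⟨hs0, by linarith⟩, ?_⟩
        rw [lt_div_iff_of_neg hc0] at hs
        rw [div_lt_iff₀ hs0]
        linarith
    rw [hIoo, ← integral_Ioc_eq_integral_Ioo, integral_mul_const,
      ← intervalIntegral.integral_of_le (div_pos_of_neg_of_neg (by norm_num) hc0).le,
      integral_const_sub_id]
    field_simp [hc0.ne]
    ring

lemma MeasureTheory.LocallyIntegrable.intervalIntegrable {f : ℝ → ℝ}
    (hf : LocallyIntegrable f volume) (a b : ℝ) : IntervalIntegrable f volume a b :=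
  (intervalIntegrable_iff').2 (hf.integrableOn_isCompact isCompact_uIcc)

lemma ae_hasDerivAt_of_sub_eq_integral {E : Type*} [NormedAddCommGroup E] [NormedSpace ℝ E]
    [CompleteSpace E] {F g : ℝ → E}
    (hF : ∀ a b : ℝ, a ≤ b → F b - F a = ∫ x in a..b, g x) (hg : LocallyIntegrable g volume) :
    ∀ᵐ y, HasDerivAt F (g y) y := by
  have hprim : F = fun y => F 0 + ∫ x in (0 : ℝ)..y, g x := by
    ext y
    rcases le_total 0 y with hy | hy
    · rw [← hF 0 y hy, add_sub_cancel]
    · rw [intervalIntegral.integral_symm, ← hF y 0 hy]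
      abel
  filter_upwards [_root_.LocallyIntegrable.ae_hasDerivAt_integral hg] with y hy
  rw [hprim]
  exact (hy 0).const_add (F 0)

variable {w : ℝ → ℝ}

lemma phiHS_of_ne_zero (hw : Measurable w) {s : ℝ} (hs : s ≠ 0) (y : ℝ) :
    phiHS w s y = 1 / 4 * ∫ x, if -2 / s < w x then Real.sign (y - x) * w x ^ 2 else 0 := by
  rw [phiHS, if_neg hs, ← integral_indicator (measurableSet_lt measurable_const hw)]
  rfl

lemma abs_phiHS_le (hw2 : Integrable fun x => w x ^ 2) (s y : ℝ) :
    |phiHS w s y| ≤ 1 / 4 * ∫ x, w x ^ 2 := by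
  have hbound := ae_of_all volume fun x => norm_sign_mul_sq_le (y - x) (w x)
  rw [phiHS, ← Real.norm_eq_abs]
  split_ifs
  · rw [norm_mul, Real.norm_of_nonneg (by norm_num : (0 : ℝ) ≤ 1 / 4)]
    gcongr
    exact norm_integral_le_of_norm_le hw2 hbound
  · rw [norm_mul, Real.norm_of_nonneg (by norm_num : (0 : ℝ) ≤ 1 / 4)]
    gcongr
    exact (norm_integral_le_of_norm_le hw2.integrableOn (ae_restrict_of_ae hbound)).trans
      (setIntegral_le_integral hw2 (ae_of_all _ fun x => sq_nonneg (w x)))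

lemma integrable_ite_sign_mul_sq (hw : Measurable w) (hw2 : Integrable fun x => w x ^ 2)
    (s y : ℝ) :
    Integrable fun x => if -2 / s < w x then Real.sign (y - x) * w x ^ 2 else 0 := by
  refine hw2.mono ?_ (ae_of_all _ fun x => ?_)
  · exact (Measurable.ite (measurableSet_lt measurable_const hw) (by fun_prop)
      measurable_const).aestronglyMeasurable
  · split_ifs
    · exact (norm_sign_mul_sq_le _ _).trans (le_abs_self _)
    · simp [sq_nonneg]

lemma phiHS_sub_phiHS (hw : Measurable w) (hw2 : Integrable fun x => w x ^ 2) {s a b : ℝ}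
    (hs : s ≠ 0) (hab : a ≤ b) :
    phiHS w s b - phiHS w s a = 1 / 2 * ∫ x in a..b, if -2 / s < w x then w x ^ 2 else 0 := by
  rw [phiHS_of_ne_zero hw hs, phiHS_of_ne_zero hw hs, ← mul_sub,
    ← integral_sub (integrable_ite_sign_mul_sq hw hw2 s b) (integrable_ite_sign_mul_sq hw hw2 s a),
    intervalIntegral.integral_of_le hab, ← integral_indicator measurableSet_Ioc,
    ← integral_const_mul (1 / 2 : ℝ), ← integral_const_mul (1 / 4 : ℝ)]
  refine integral_congr_ae ?_
  filter_upwards [Measure.ae_ne volume a, Measure.ae_ne volume b] with x hxa hxb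
  have hsign := Real.sign_sub_sub_sign_sub hab hxa hxb
  by_cases hP : -2 / s < w x
  · simp only [indicator_apply, if_pos hP]
    split_ifs at hsign ⊢ <;> linear_combination w x ^ 2 / 4 * hsign
  · simp [indicator_apply, if_neg hP]

lemma aestronglyMeasurable_phiHS (hw : Measurable w) (y : ℝ) :
    AEStronglyMeasurable (fun s => phiHS w s y) volume := by
  have hprod : Measurable (Function.uncurry fun s x =>
      if -2 / s < w x then Real.sign (y - x) * w x ^ 2 else 0) :=
    Measurable.ite (measurableSet_lt (by fun_prop) (hw.comp measurable_snd)) (by fun_prop)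
      measurable_const
  refine ((StronglyMeasurable.integral_prod_right (ν := volume)
    hprod.stronglyMeasurable).measurable.const_mul (1 / 4)).aestronglyMeasurable.congr ?_
  filter_upwards [Measure.ae_ne volume 0] with s hs
  exact (phiHS_of_ne_zero hw hs y).symm

lemma intervalIntegrable_mul_phiHS (hw : Measurable w) (hw2 : Integrable fun x => w x ^ 2)
    (t y : ℝ) : IntervalIntegrable (fun s => (t - s) * phiHS w s y) volume 0 t := by
  have hphi : IntervalIntegrable (fun s => phiHS w s y) volume 0 t :=
    intervalIntegrable_iff.2 <| Measure.integrableOn_of_bounded measure_Ioc_lt_top.ne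
      (aestronglyMeasurable_phiHS hw y) (ae_of_all _ fun s => abs_phiHS_le hw2 s y)
  exact hphi.continuousOn_mul (by fun_prop)

lemma phiHS_congr_ae {w' : ℝ → ℝ} (h : w =ᵐ[volume] w') : phiHS w = phiHS w' := by
  ext s y
  by_cases hs : s = 0
  · simp only [phiHS, if_pos hs]
    congr 1
    refine integral_congr_ae ?_
    filter_upwards [h] with x hx
    rw [hx]
  · simp only [phiHS, if_neg hs]
    have hset : {x | w x > -2 / s} =ᵐ[volume] {x | w' x > -2 / s} := by
      filter_upwards [h] with x hx
      change (w x > -2 / s) = (w' x > -2 / s)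
      rw [hx]
    rw [Measure.restrict_congr_set hset]
    congr 1
    refine integral_congr_ae (ae_restrict_of_ae ?_)
    filter_upwards [h] with x hx
    rw [hx]

lemma integral_mul_phiHS_sub_phiHS (hw : Measurable w) (hw2 : Integrable fun x => w x ^ 2)
    (t : ℝ) {a b : ℝ} (hab : a ≤ b) :
    ∫ s in (0 : ℝ)..t, (t - s) * (phiHS w s b - phiHS w s a) =
      ∫ x in a..b, ∫ s in (0 : ℝ)..t,
        (if -2 / s < w x then (t - s) * (w x ^ 2 / 2) else 0) := by
  set F : ℝ → ℝ → ℝ := fun s x => if -2 / s < w x then (t - s) * (w x ^ 2 / 2) else 0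
  have hF : Integrable (Function.uncurry F)
      ((volume.restrict (uIoc 0 t)).prod (volume.restrict (Ioc a b))) := by
    have hts : Continuous fun s : ℝ => t - s := by fun_prop
    refine (((hts.intervalIntegrable 0 t).def').mul_prod
      (hw2.integrableOn.div_const 2)).mono ?_ (ae_of_all _ fun p => ?_)
    · exact (Measurable.ite (measurableSet_lt (by fun_prop) (hw.comp measurable_snd))
        (by fun_prop) measurable_const).aestronglyMeasurable
    · simp only [Function.uncurry, F]
      split_ifs
      · exact le_rfl
      · rw [norm_zero]
        positivity
  calc ∫ s in (0 : ℝ)..t, (t - s) * (phiHS w s b - phiHS w s a)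
      = ∫ s in (0 : ℝ)..t, ∫ x in Ioc a b, F s x := by
        refine intervalIntegral.integral_congr_ae ?_
        filter_upwards [Measure.ae_ne volume 0] with s hs _
        rw [phiHS_sub_phiHS hw hw2 hs hab, intervalIntegral.integral_of_le hab,
          ← integral_const_mul, ← integral_const_mul]
        congr with x
        simp only [F]
        split_ifs <;> ring
    _ = ∫ x in a..b, ∫ s in (0 : ℝ)..t, F s x := by
        rw [intervalIntegral_integral_swap hF, intervalIntegral.integral_of_le hab]

noncomputable def xiDeriv (w : ℝ → ℝ) (t y : ℝ) : ℝ :=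
  if w y > -2 / t then 1 / 4 * (2 + t * w y) ^ 2 else 0

lemma xiDeriv_congr_ae {w' : ℝ → ℝ} (h : w =ᵐ[volume] w') (t : ℝ) :
    xiDeriv w t =ᵐ[volume] xiDeriv w' t := by
  filter_upwards [h] with x hx
  rw [xiDeriv, xiDeriv, hx]

lemma locallyIntegrable_xiDeriv (hL2 : MemLp w 2 volume) (t : ℝ) :
    LocallyIntegrable (xiDeriv w t) volume := by
  have hw := hL2.1.aemeasurable
  have hmeas : AEStronglyMeasurable (xiDeriv w t) volume := by
    refine (Measurable.aestronglyMeasurable ?_).congr (xiDeriv_congr_ae hw.ae_eq_mk t).symm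
    exact Measurable.ite (measurableSet_lt measurable_const hw.measurable_mk) (by fun_prop)
      measurable_const
  refine ((locallyIntegrable_const 2).add
    (hL2.integrable_sq.const_mul (t ^ 2 / 2)).locallyIntegrable).mono hmeas
    (ae_of_all _ fun x => ?_)
  rw [xiDeriv]
  split_ifs
  · rw [Pi.add_apply, Real.norm_of_nonneg (by positivity), Real.norm_of_nonneg (by positivity)]
    nlinarith [sq_nonneg (t * w x - 2)]
  · rw [norm_zero]
    exact norm_nonneg _

lemma xiHS_sub_xiHS_of_measurable {u : ℝ → ℝ} (hw : Measurable w) (hL2 : MemLp w 2 volume)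
    (hAC : ∀ a b : ℝ, a ≤ b → u b - u a = ∫ x in a..b, w x) {t : ℝ} (ht : 0 < t)
    {a b : ℝ} (hab : a ≤ b) :
    xiHS u w t b - xiHS u w t a = ∫ y in a..b, xiDeriv w t y := by
  have hw2 := hL2.integrable_sq
  have hwi : IntervalIntegrable w volume a b :=
    (hL2.locallyIntegrable (by norm_num)).intervalIntegrable a b
  have hgi := (locallyIntegrable_xiDeriv hL2 t).intervalIntegrable a b
  have hinner : ∀ x, ∫ s in (0 : ℝ)..t, (if -2 / s < w x then (t - s) * (w x ^ 2 / 2) else 0) =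
      xiDeriv w t x - 1 - t * w x := fun x => by
    rw [xiDeriv, ← one_add_mul_add_integral_ite ht]
    ring
  calc xiHS u w t b - xiHS u w t a
      = (b - a) + t * (u b - u a) + ∫ s in (0 : ℝ)..t, (t - s) * (phiHS w s b - phiHS w s a) := by
        simp only [xiHS, mul_sub]
        rw [intervalIntegral.integral_sub (intervalIntegrable_mul_phiHS hw hw2 t b)
          (intervalIntegrable_mul_phiHS hw hw2 t a)]
        ring
    _ = (b - a) + t * (∫ x in a..b, w x) + ∫ x in a..b, (xiDeriv w t x - 1 - t * w x) := by
        simp only [hAC a b hab, integral_mul_phiHS_sub_phiHS hw hw2 t hab, hinner]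
    _ = ∫ y in a..b, xiDeriv w t y := by
        rw [intervalIntegral.integral_sub (hgi.sub intervalIntegrable_const) (hwi.const_mul t),
          intervalIntegral.integral_sub hgi intervalIntegrable_const,
          intervalIntegral.integral_const_mul, intervalIntegral.integral_const, smul_eq_mul]
        ring

lemma xiHS_sub_xiHS {u : ℝ → ℝ} (hL2 : MemLp w 2 volume)
    (hAC : ∀ a b : ℝ, a ≤ b → u b - u a = ∫ x in a..b, w x) {t : ℝ} (ht : 0 < t)
    {a b : ℝ} (hab : a ≤ b) :
    xiHS u w t b - xiHS u w t a = ∫ y in a..b, xiDeriv w t y := by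
  have hw := hL2.1.aemeasurable
  have hAC' : ∀ a b : ℝ, a ≤ b → u b - u a = ∫ x in a..b, hw.mk w x := fun a b hab =>
    (hAC a b hab).trans <| intervalIntegral.integral_congr_ae <|
      hw.ae_eq_mk.mono fun x hx _ => hx
  have hxi : xiHS u w t = xiHS u (hw.mk w) t := by
    ext y
    rw [xiHS, xiHS, phiHS_congr_ae hw.ae_eq_mk]
  rw [hxi, xiHS_sub_xiHS_of_measurable hw.measurable_mk (hL2.ae_eq hw.ae_eq_mk) hAC' ht hab]
  exact intervalIntegral.integral_congr_ae <|
    (xiDeriv_congr_ae hw.ae_eq_mk t).mono fun x hx _ => hx.symm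

/-- For each `t > 0` the map `y ↦ ξ(t,y)` is (locally) absolutely continuous, with
a.e. derivative `(1/4)(2 + t ū_x(y))²` where `ū_x(y) > -2/t` and `0` where
`ū_x(y) ≤ -2/t`. -/
theorem xi_spatial_derivative (ubar ubarx : ℝ → ℝ)
    (hAC : ∀ a b : ℝ, a ≤ b → ubar b - ubar a = ∫ x in a..b, ubarx x)
    (hL2 : MemLp ubarx 2 (volume : Measure ℝ)) :
    ∀ t : ℝ, 0 < t →
      (∀ a b : ℝ, a ≤ b →
        xiHS ubar ubarx t b - xiHS ubar ubarx t a =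
          ∫ y in a..b,
            (if ubarx y > -2 / t then (1 / 4) * (2 + t * ubarx y) ^ 2 else 0)) ∧
      (∀ᵐ y : ℝ, HasDerivAt (fun z => xiHS ubar ubarx t z)
        (if ubarx y > -2 / t then (1 / 4) * (2 + t * ubarx y) ^ 2 else 0) y) := by
  intro t ht
  have hsub := fun a b (hab : a ≤ b) => xiHS_sub_xiHS hL2 hAC ht hab
  exact ⟨hsub, ae_hasDerivAt_of_sub_eq_integral hsub (locallyIntegrable_xiDeriv hL2 t)⟩
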